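/- Let r ≤ s, C ∈ Herm_r^{++}, D ∈ Herm_s^{++}, and let Λ = diag(max{1,λ_1(C^{-1}D_{11})},…,max{1,λ_r(C^{-1}D_{11})}). Then there is a unique matrix D_− ∈ Ω_−(D) = {X ∈ Herm_r^{++} : D_{11} ⪯ X} whose eigenvalues of C^{-1/2} D_− C^{-1/2} are exactly max{1, λ_k(C^{-1}D_{11})} for k = 1,…,r. Explicitly, D_− = C^{1/2} Q* Λ Q C^{1/2} where Q ∈ U(r) comes from a diagonalization C^{-1/2} D_{11} C^{-1/2} = Q* diag(λ_1(C^{-1}D_{11}),…,λ_r(C^{-1}D_{11})) Q. -/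

import Mathlib

noncomputable section

open Matrix Finset
open scoped ComplexOrder

abbrev Mat (p : ℕ) := Matrix (Fin p) (Fin p) ℂ
abbrev Euc (n : ℕ) := EuclideanSpace ℂ (Fin n)

/-- Loewner order: `X ⪯ Y`. -/
def loewner {p : ℕ} (X Y : Mat p) : Prop := (Y - X).PosSemidef

/-- The positive semidefinite square root of a positive semidefinite matrix
(the definition `Matrix.PosSemidef.sqrt` of the older Mathlib, removed since). -/
def Matrix.PosSemidef.sqrt {n 𝕜 : Type*} [Fintype n] [DecidableEq n] [RCLike 𝕜]
    {A : Matrix n n 𝕜} (hA : A.PosSemidef) : Matrix n n 𝕜 :=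
  (hA.isHermitian.eigenvectorUnitary : Matrix n n 𝕜) *
    diagonal (((↑) : ℝ → 𝕜) ∘ (√·) ∘ hA.isHermitian.eigenvalues) *
    (star hA.isHermitian.eigenvectorUnitary : Matrix n n 𝕜)

theorem Matrix.PosSemidef.sqrt_isHermitian' {n 𝕜 : Type*} [Fintype n] [DecidableEq n] [RCLike 𝕜]
    {A : Matrix n n 𝕜} (hA : A.PosSemidef) : hA.sqrt.IsHermitian := by
  unfold Matrix.PosSemidef.sqrt
  rw [star_eq_conjTranspose]
  apply isHermitian_mul_mul_conjTranspose
  apply isHermitian_diagonal_of_self_adjoint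
  funext i
  simp

/-- Eigenvalues (unsorted) of `X^{-1/2} Y X^{-1/2}`, i.e. of the pencil `X⁻¹ Y`. -/
def relEigs {p : ℕ} {X Y : Mat p} (hX : X.PosDef) (hY : Y.IsHermitian) : Fin p → ℝ :=
  Matrix.IsHermitian.eigenvalues (A := hX.posSemidef.sqrt⁻¹ * Y * hX.posSemidef.sqrt⁻¹) (by
    have hS : (hX.posSemidef.sqrt).IsHermitian := hX.posSemidef.sqrt_isHermitian'
    have hSi : (hX.posSemidef.sqrt⁻¹).IsHermitian := hS.inv
    have h : hX.posSemidef.sqrt⁻¹ * Y * hX.posSemidef.sqrt⁻¹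
        = hX.posSemidef.sqrt⁻¹ * Y * (hX.posSemidef.sqrt⁻¹)ᴴ := by rw [hSi.eq]
    rw [h]
    exact Matrix.isHermitian_mul_mul_conjTranspose _ hY)

/-- Eigenvalues of a Hermitian matrix, sorted in decreasing order. -/
def eigsDesc {p : ℕ} {Z : Mat p} (hZ : Z.IsHermitian) : Fin p → ℝ :=
  fun i => (hZ.eigenvalues ∘ Tuple.sort hZ.eigenvalues) i.rev

/-- Decreasingly sorted eigenvalues of the pencil `X⁻¹ Y`. -/
def relEigsDesc {p : ℕ} {X Y : Mat p} (hX : X.PosDef) (hY : Y.IsHermitian) : Fin p → ℝ :=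
  fun i => ((relEigs hX hY) ∘ Tuple.sort (relEigs hX hY)) i.rev

/-- Zero-padding of an `a × a` matrix to an `N × N` matrix. -/
def padTo (N : ℕ) {a : ℕ} (A : Mat a) : Mat N :=
  Matrix.of fun i j => if h : (i : ℕ) < a ∧ (j : ℕ) < a then A ⟨i, h.1⟩ ⟨j, h.2⟩ else 0

/-- `diag(P, I)` where `P` is `c × c`. -/
def upPad {s : ℕ} (c : ℕ) (P : Mat c) : Mat s :=
  Matrix.of fun i j =>
    if hi : (i : ℕ) < c then (if hj : (j : ℕ) < c then P ⟨i, hi⟩ ⟨j, hj⟩ else 0)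
    else if (i : ℕ) = (j : ℕ) then 1 else 0

/-- `diag(I_c, T)` where `T` is `(s-c) × (s-c)`. -/
def lowPad {s : ℕ} (c : ℕ) (T : Mat (s - c)) : Mat s :=
  Matrix.of fun i j =>
    if hi : (i : ℕ) < c then (if (i : ℕ) = (j : ℕ) then 1 else 0)
    else if hj : (j : ℕ) < c then 0
    else T ⟨(i : ℕ) - c, by have := i.isLt; omega⟩ ⟨(j : ℕ) - c, by have := j.isLt; omega⟩

/-- The natural isometric inclusion `k^a → k^N` (for `a ≤ N`), as a linear map. -/
def incl (a N : ℕ) : Euc a →ₗ[ℂ] Euc N :=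
  Matrix.toEuclideanLin (Matrix.of fun (i : Fin N) (j : Fin a) => if (i : ℕ) = (j : ℕ) then (1 : ℂ) else 0)

/-- The orthogonal complement of the kernel of (the linear map of) a matrix. -/
def kerPerp {n : ℕ} (A : Mat n) : Submodule ℂ (Euc n) :=
  (LinearMap.ker (Matrix.toEuclideanLin A))ᗮ

/-- Matrix representation `(uᵢ* A uⱼ)` of `A` with respect to a tuple of vectors `u`. -/
def rep {n p : ℕ} (A : Mat n) (u : Fin p → Euc n) : Mat p :=
  Matrix.of fun i j => (inner ℂ (u i) (Matrix.toEuclideanLin A (u j)) : ℂ)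

/-- `(u, v)` is a set of principal vectors between `U` and `V` with cosines of principal
angles `σ` (decreasing). -/
def IsPrincipalSystem {N p q : ℕ} (U V : Submodule ℂ (Euc N))
    (u : Fin p → Euc N) (v : Fin q → Euc N) (σ : Fin (min p q) → ℝ) : Prop :=
  Orthonormal ℂ u ∧ Submodule.span ℂ (Set.range u) = U ∧
  Orthonormal ℂ v ∧ Submodule.span ℂ (Set.range v) = V ∧
  Antitone σ ∧ (∀ i, 0 ≤ σ i) ∧
  ∀ (i : Fin p) (j : Fin q), (inner ℂ (u i) (v j) : ℂ) =
    if h : (i : ℕ) = (j : ℕ) ∧ (i : ℕ) < min p q then ((σ ⟨(i : ℕ), h.2⟩ : ℝ) : ℂ) else 0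

/-- Geodesic distance on Grassmannians: square root of the sum of squared principal angles. -/
def dGr {N : ℕ} (U V : Submodule ℂ (Euc N)) : ℝ :=
  sInf {x | ∃ (u : Fin (Module.finrank ℂ U) → Euc N) (v : Fin (Module.finrank ℂ V) → Euc N)
    (σ : Fin (min (Module.finrank ℂ U) (Module.finrank ℂ V)) → ℝ),
    IsPrincipalSystem U V u v σ ∧ x = Real.sqrt (∑ i, Real.arccos (σ i) ^ 2)}

/-- Generalized Hausdorff value of a function on a subset of a product. -/
def hausd {α β : Type*} (δ : α → β → ℝ) (Z : Set (α × β)) : ℝ :=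
  max (sSup {x | ∃ a ∈ Prod.fst '' Z, x = sInf {y | ∃ b, (a, b) ∈ Z ∧ y = δ a b}})
      (sSup {x | ∃ b ∈ Prod.snd '' Z, x = sInf {y | ∃ a, (a, b) ∈ Z ∧ y = δ a b}})

/-- The set of pairs of matrix representations with respect to all principal vector systems. -/
def ZSet {N p q : ℕ} (A B : Mat N) : Set (Mat p × Mat q) :=
  {z | ∃ u v σ, IsPrincipalSystem (kerPerp A) (kerPerp B) u v σ ∧ z = (rep A u, rep B v)}

/-- The geometric distance `GD_{d,δ}` between PSD matrices of possibly different sizes. -/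
def GD {n m p q : ℕ} (d : ∀ N, Submodule ℂ (Euc N) → Submodule ℂ (Euc N) → ℝ)
    (δ : Mat p → Mat q → ℝ) (A : Mat n) (B : Mat m) : ℝ :=
  Real.sqrt (d (max n m) (kerPerp (padTo (max n m) A)) (kerPerp (padTo (max n m) B)) ^ 2 +
    hausd δ (ZSet (padTo (max n m) A) (padTo (max n m) B)) ^ 2)

end

section Helpers

open Finset Polynomial Matrix
open scoped ComplexOrder

namespace UProj

variable {r : ℕ}

lemma sort_comp_eq_of_perm {f g : Fin r → ℝ} (h : (List.ofFn f).Perm (List.ofFn g)) :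
    f ∘ Tuple.sort f = g ∘ Tuple.sort g :=
  List.ofFn_injective <|
    List.Perm.eq_of_pairwise'
      (Tuple.monotone_sort f).sortedLE_ofFn.pairwise (Tuple.monotone_sort g).sortedLE_ofFn.pairwise
      (((Tuple.sort f).ofFn_comp_perm f).trans (h.trans ((Tuple.sort g).ofFn_comp_perm g).symm))

lemma perm_of_multiset_eq {f g : Fin r → ℝ}
    (h : Multiset.map f Finset.univ.val = Multiset.map g Finset.univ.val) :
    (List.ofFn f).Perm (List.ofFn g) := by
  rw [Fin.univ_val_map, Fin.univ_val_map] at h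
  exact Multiset.coe_eq_coe.mp h

/-- Sorting commutes with postcomposition by `max 1`. -/
lemma sort_max_one (f : Fin r → ℝ) :
    ((fun x => max 1 x) ∘ f) ∘ Tuple.sort ((fun x => max 1 x) ∘ f)
      = (fun x => max 1 x) ∘ (f ∘ Tuple.sort f) := by
  have h1 : Monotone (((fun x => max 1 x) ∘ f) ∘ Tuple.sort f) := by
    intro a b hab
    exact max_le_max le_rfl (Tuple.monotone_sort f hab)
  have := Tuple.unique_monotone (f := (fun x => max 1 x) ∘ f) h1
      (Tuple.monotone_sort ((fun x => max 1 x) ∘ f))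
  rw [← this]
  rfl

lemma sum_desc (h : Fin r → ℝ) (σ : Equiv.Perm (Fin r)) :
    ∑ i, h (σ (Fin.rev i)) = ∑ i, h i := by
  rw [Fintype.sum_bijective Fin.rev Fin.rev_involutive.bijective
    (fun i => h (σ (Fin.rev i))) (fun i => h (σ i)) (fun i => rfl)]
  exact Equiv.sum_comp σ h

/-- charmatrix of a unitary conjugate. -/
lemma charpoly_unitary_conj (U A : Matrix (Fin r) (Fin r) ℂ)
    (hU : U ∈ Matrix.unitaryGroup (Fin r) ℂ) :
    (U * A * Uᴴ).charpoly = A.charpoly := by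
  have hUU : U * Uᴴ = 1 := by
    have := (Matrix.mem_unitaryGroup_iff).mp hU
    rwa [Matrix.star_eq_conjTranspose] at this
  have hrepr : ∀ B : Matrix (Fin r) (Fin r) ℂ, Matrix.charmatrix B
      = Matrix.diagonal (fun _ : Fin r => (Polynomial.X : ℂ[X]))
        - B.map (Polynomial.C : ℂ →+* ℂ[X]) := by
    intro B
    refine Matrix.ext fun i j => ?_
    rw [Matrix.charmatrix_apply]
    rfl
  have hPP' : U.map (Polynomial.C : ℂ →+* ℂ[X]) * Uᴴ.map (Polynomial.C : ℂ →+* ℂ[X]) = 1 := by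
    rw [← Matrix.map_mul, hUU, Matrix.map_one _ (map_zero _) (map_one _)]
  have hch : Matrix.charmatrix (U * A * Uᴴ)
      = U.map (Polynomial.C : ℂ →+* ℂ[X]) * Matrix.charmatrix A
        * Uᴴ.map (Polynomial.C : ℂ →+* ℂ[X]) := by
    rw [hrepr, hrepr, Matrix.mul_sub, Matrix.sub_mul]
    congr 1
    · rw [← Matrix.smul_one_eq_diagonal, mul_smul_comm, smul_mul_assoc, mul_one, hPP']
    · rw [← Matrix.map_mul, ← Matrix.map_mul]
  rw [Matrix.charpoly, Matrix.charpoly, hch, Matrix.det_mul, Matrix.det_mul]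
  have hdet : (U.map (Polynomial.C : ℂ →+* ℂ[X])).det
      * (Uᴴ.map (Polynomial.C : ℂ →+* ℂ[X])).det = 1 := by
    rw [← Matrix.det_mul, hPP', Matrix.det_one]
  calc (U.map (Polynomial.C : ℂ →+* ℂ[X])).det * (Matrix.charmatrix A).det
        * (Uᴴ.map (Polynomial.C : ℂ →+* ℂ[X])).det
      = (Matrix.charmatrix A).det * ((U.map (Polynomial.C : ℂ →+* ℂ[X])).det
        * (Uᴴ.map (Polynomial.C : ℂ →+* ℂ[X])).det) := by ring
    _ = (Matrix.charmatrix A).det := by rw [hdet, mul_one]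

lemma charpoly_diagonal (d : Fin r → ℂ) :
    (Matrix.diagonal d).charpoly = ∏ i, (Polynomial.X - Polynomial.C (d i)) := by
  have : Matrix.charmatrix (Matrix.diagonal d)
      = Matrix.diagonal (fun i => (Polynomial.X : ℂ[X]) - Polynomial.C (d i)) := by
    refine Matrix.ext fun i j => ?_
    by_cases h : i = j
    · subst h; simp [Matrix.charmatrix_apply_eq]
    · simp [Matrix.charmatrix_apply_ne _ _ _ h, Matrix.diagonal_apply_ne _ h]
  rw [Matrix.charpoly, this, Matrix.det_diagonal]

lemma roots_prod (c : Fin r → ℂ) :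
    (∏ i, (Polynomial.X - Polynomial.C (c i))).roots = Multiset.map c Finset.univ.val := by
  have : ∏ i, (Polynomial.X - Polynomial.C (c i))
      = ((Multiset.map c Finset.univ.val).map fun a => Polynomial.X - Polynomial.C a).prod := by
    rw [Multiset.map_map]
    rfl
  rw [this, Polynomial.roots_multiset_prod_X_sub_C]

/-- The eigenvalues of a Hermitian matrix which is a unitary conjugate of a real diagonal
matrix are a permutation of the diagonal entries. -/
lemma eig_perm {W : Matrix (Fin r) (Fin r) ℂ} (hW : W.IsHermitian)
    {V : Matrix (Fin r) (Fin r) ℂ} (hV : V ∈ Matrix.unitaryGroup (Fin r) ℂ)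
    {d : Fin r → ℝ}
    (hWd : W = V * Matrix.diagonal (fun i => ((d i : ℝ) : ℂ)) * Vᴴ) :
    (List.ofFn hW.eigenvalues).Perm (List.ofFn d) := by
  apply perm_of_multiset_eq
  have h1 : W.charpoly = ∏ i, (Polynomial.X - Polynomial.C ((d i : ℝ) : ℂ)) := by
    rw [hWd, charpoly_unitary_conj _ _ hV, charpoly_diagonal]
  have h2 : W.charpoly
      = ∏ i, (Polynomial.X - Polynomial.C ((hW.eigenvalues i : ℝ) : ℂ)) := by
    have hU := (hW.eigenvectorUnitary).2
    conv_lhs => rw [hW.spectral_theorem, Unitary.conjStarAlgAut_apply]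
    rw [← Matrix.star_eq_conjTranspose] at *
    rw [show (star (hW.eigenvectorUnitary : Matrix (Fin r) (Fin r) ℂ))
        = (hW.eigenvectorUnitary : Matrix (Fin r) (Fin r) ℂ)ᴴ from rfl]
    rw [charpoly_unitary_conj _ _ hU, charpoly_diagonal]
    rfl
  have h3 := h2.symm.trans h1
  have h4 := congrArg Polynomial.roots h3
  rw [roots_prod, roots_prod] at h4
  have h5 : Multiset.map (fun x : ℝ => (x : ℂ)) (Multiset.map hW.eigenvalues Finset.univ.val)
      = Multiset.map (fun x : ℝ => (x : ℂ)) (Multiset.map d Finset.univ.val) := by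
    rw [Multiset.map_map, Multiset.map_map]
    exact h4
  exact Multiset.map_injective Complex.ofReal_injective h5


lemma posDef_conj_left {A B : Matrix (Fin r) (Fin r) ℂ} (hA : A.PosDef) (hB : IsUnit B) :
    (Bᴴ * A * B).PosDef := by
  exact hA.conjTranspose_mul_mul_same (Matrix.mulVec_injective_iff_isUnit.mpr hB)

lemma posDef_conj_right {A B : Matrix (Fin r) (Fin r) ℂ} (hA : A.PosDef) (hB : IsUnit B) :
    (B * A * Bᴴ).PosDef := by
  have := posDef_conj_left hA ((Matrix.isUnit_conjTranspose B).mpr hB)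
  simpa only [Matrix.conjTranspose_conjTranspose] using this

lemma unitary_isUnit {V : Matrix (Fin r) (Fin r) ℂ} (hV : V ∈ Matrix.unitaryGroup (Fin r) ℂ) :
    IsUnit V := by
  have h := (Matrix.mem_unitaryGroup_iff).mp hV
  have hd : V.det * (star V).det = 1 := by rw [← Matrix.det_mul, h, Matrix.det_one]
  exact (Matrix.isUnit_iff_isUnit_det V).mpr (isUnit_iff_exists_inv.mpr ⟨_, hd⟩)

lemma sqrt_posDef {C : Matrix (Fin r) (Fin r) ℂ} (hC : C.PosDef) :
    (hC.posSemidef.sqrt).PosDef := by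
  unfold Matrix.PosSemidef.sqrt
  rw [star_eq_conjTranspose]
  exact posDef_conj_right
    (Matrix.PosDef.diagonal fun i => by
      simp only [Function.comp_apply]
      exact Complex.zero_lt_real.mpr (Real.sqrt_pos.mpr (hC.eigenvalues_pos i)))
    (unitary_isUnit hC.posSemidef.isHermitian.eigenvectorUnitary.2)

lemma diag_nonneg {P : Matrix (Fin r) (Fin r) ℂ} (hP : P.PosSemidef) (i : Fin r) :
    0 ≤ P i i := by
  exact hP.diag_nonneg

lemma single_val {P : Matrix (Fin r) (Fin r) ℂ} (i : Fin r) :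
    star (Pi.single i (1:ℂ)) ⬝ᵥ P *ᵥ Pi.single i 1 = P i i := by
  simp [dotProduct, Matrix.mulVec_single, Pi.single_apply, Finset.sum_ite_eq',
    apply_ite]

lemma row_zero {P : Matrix (Fin r) (Fin r) ℂ} (hP : P.PosSemidef) {i : Fin r}
    (h : P i i = 0) (j : Fin r) : P i j = 0 := by
  have h0 : P *ᵥ Pi.single i 1 = 0 :=
    (hP.dotProduct_mulVec_zero_iff _).mp (by rw [single_val, h])
  have hji : P j i = 0 := by
    have := congrFun h0 j
    simpa [Matrix.mulVec_single] using this
  rw [← hP.isHermitian.apply i j, hji, star_zero]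

lemma trace_eq_sum_eigen {Y : Matrix (Fin r) (Fin r) ℂ} (hY : Y.IsHermitian) :
    Y.trace = ((∑ i, hY.eigenvalues i : ℝ) : ℂ) := by
  conv_lhs => rw [hY.spectral_theorem, Unitary.conjStarAlgAut_apply]
  rw [Matrix.trace_mul_comm, ← Matrix.mul_assoc,
    (Matrix.mem_unitaryGroup_iff').mp hY.eigenvectorUnitary.2, one_mul,
    Matrix.trace_diagonal]
  push_cast
  rfl

lemma sub_one_psd {Y : Matrix (Fin r) (Fin r) ℂ} (hY : Y.IsHermitian)
    (h : ∀ i, 1 ≤ hY.eigenvalues i) : (Y - 1).PosSemidef := by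
  have hd : Matrix.diagonal (fun i => ((hY.eigenvalues i - 1 : ℝ) : ℂ))
      = Matrix.diagonal (RCLike.ofReal ∘ hY.eigenvalues) - 1 := by
    rw [← Matrix.diagonal_one, Matrix.diagonal_sub]
    congr 1
    funext i
    push_cast
    rfl
  have key : Y - 1 = (hY.eigenvectorUnitary : Matrix (Fin r) (Fin r) ℂ)
      * Matrix.diagonal (fun i => ((hY.eigenvalues i - 1 : ℝ) : ℂ))
      * star (hY.eigenvectorUnitary : Matrix (Fin r) (Fin r) ℂ) := by
    rw [hd, Matrix.mul_sub, mul_one, Matrix.sub_mul, ← hY.spectral_theorem.trans (Unitary.conjStarAlgAut_apply _ _),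
      (Matrix.mem_unitaryGroup_iff).mp hY.eigenvectorUnitary.2]
  rw [key]
  have hdge : (0 : Fin r → ℂ) ≤ fun i => ((hY.eigenvalues i - 1 : ℝ) : ℂ) := by
    intro i
    simp only [Pi.zero_apply]
    exact Complex.zero_le_real.mpr (by linarith [h i])
  exact Matrix.PosSemidef.mul_mul_conjTranspose_same (Matrix.PosSemidef.diagonal hdge) _


lemma conj_cancel {S : Matrix (Fin r) (Fin r) ℂ} (h12 : S * S⁻¹ = 1) (h21 : S⁻¹ * S = 1)
    (A : Matrix (Fin r) (Fin r) ℂ) : S * (S⁻¹ * A * S⁻¹) * S = A := by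
  calc S * (S⁻¹ * A * S⁻¹) * S = (S * S⁻¹) * A * (S⁻¹ * S) := by simp only [Matrix.mul_assoc]
    _ = A := by rw [h12, h21, one_mul, mul_one]

lemma relHerm {X Y : Matrix (Fin r) (Fin r) ℂ} (hX : X.PosDef) (hY : Y.IsHermitian) :
    (hX.posSemidef.sqrt⁻¹ * Y * hX.posSemidef.sqrt⁻¹).IsHermitian := by
  have hS : (hX.posSemidef.sqrt).IsHermitian := hX.posSemidef.sqrt_isHermitian'
  have hSi : (hX.posSemidef.sqrt⁻¹).IsHermitian := hS.inv
  have h : hX.posSemidef.sqrt⁻¹ * Y * hX.posSemidef.sqrt⁻¹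
      = hX.posSemidef.sqrt⁻¹ * Y * (hX.posSemidef.sqrt⁻¹)ᴴ := by rw [hSi.eq]
  rw [h]
  exact Matrix.isHermitian_mul_mul_conjTranspose _ hY

/-- The key rigidity lemma: a matrix `Y` that dominates `diag λ` and `1`, and whose
trace equals `∑ max 1 λᵢ`, must equal `diag (max 1 λ)`. -/
lemma core {Y : Matrix (Fin r) (Fin r) ℂ} (lam : Fin r → ℝ)
    (hA : (Y - Matrix.diagonal (fun i => ((lam i : ℝ) : ℂ))).PosSemidef)
    (hB : (Y - 1).PosSemidef)
    (htr : Y.trace = ((∑ i, max 1 (lam i) : ℝ) : ℂ)) :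
    Y = Matrix.diagonal (fun i => ((max 1 (lam i) : ℝ) : ℂ)) := by
  have ha : ∀ i, (0:ℝ) ≤ if 1 < lam i then ((Y - Matrix.diagonal (fun i => ((lam i : ℝ) : ℂ))) i i).re
      else ((Y - 1) i i).re := by
    intro i
    by_cases h : 1 < lam i
    · simpa [h] using (Complex.le_def.mp (diag_nonneg hA i)).1
    · simpa [h] using (Complex.le_def.mp (diag_nonneg hB i)).1
  have hrepr : ∀ i, (if 1 < lam i then ((Y - Matrix.diagonal (fun i => ((lam i : ℝ) : ℂ))) i i).re
      else ((Y - 1) i i).re) = (Y i i).re - max 1 (lam i) := by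
    intro i
    by_cases h : 1 < lam i
    · rw [if_pos h, max_eq_right h.le]
      simp [Matrix.sub_apply, Complex.sub_re]
    · rw [if_neg h, max_eq_left (not_lt.mp h)]
      simp [Matrix.sub_apply, Complex.sub_re]
  have hsum : ∑ i, (if 1 < lam i then ((Y - Matrix.diagonal (fun i => ((lam i : ℝ) : ℂ))) i i).re
      else ((Y - 1) i i).re) = 0 := by
    rw [Finset.sum_congr rfl fun i _ => hrepr i, Finset.sum_sub_distrib]
    have h1 : ∑ i, (Y i i).re = (Y.trace).re := by
      rw [Matrix.trace]
      exact (Complex.re_sum _ _).symm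
    rw [h1, htr, Complex.ofReal_re, sub_self]
  have hzero : ∀ i, (if 1 < lam i then ((Y - Matrix.diagonal (fun i => ((lam i : ℝ) : ℂ))) i i).re
      else ((Y - 1) i i).re) = 0 := by
    intro i
    exact (Finset.sum_eq_zero_iff_of_nonneg (fun i _ => ha i)).mp hsum i (Finset.mem_univ i)
  refine Matrix.ext fun i j => ?_
  by_cases h : 1 < lam i
  · have hAii : (Y - Matrix.diagonal (fun i => ((lam i : ℝ) : ℂ))) i i = 0 := by
      have h1 : ((Y - Matrix.diagonal (fun i => ((lam i : ℝ) : ℂ))) i i).re = 0 := by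
        simpa [h] using hzero i
      have h2 := Complex.le_def.mp (diag_nonneg hA i)
      exact Complex.ext (by simpa using h1) (by simpa using h2.2.symm)
    have hrow := row_zero hA hAii j
    have hYij : Y i j = Matrix.diagonal (fun i => ((lam i : ℝ) : ℂ)) i j := by
      have := hrow
      rw [Matrix.sub_apply, sub_eq_zero] at this
      exact this
    rw [hYij]
    by_cases hij : i = j
    · subst hij
      simp [Matrix.diagonal_apply_eq, max_eq_right h.le]
    · simp [Matrix.diagonal_apply_ne _ hij]
  · have hBii : (Y - 1) i i = 0 := by
      have h1 : ((Y - 1) i i).re = 0 := by simpa [h] using hzero i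
      have h2 := Complex.le_def.mp (diag_nonneg hB i)
      exact Complex.ext (by simpa using h1) (by simpa using h2.2.symm)
    have hrow := row_zero hB hBii j
    have hYij : Y i j = (1 : Matrix (Fin r) (Fin r) ℂ) i j := by
      have := hrow
      rw [Matrix.sub_apply, sub_eq_zero] at this
      exact this
    rw [hYij]
    by_cases hij : i = j
    · subst hij
      simp [Matrix.one_apply_eq, max_eq_left (not_lt.mp h)]
    · simp [Matrix.one_apply_ne hij, Matrix.diagonal_apply_ne _ hij]


lemma prop_of_diag {C D11 : Matrix (Fin r) (Fin r) ℂ} (hC : C.PosDef) (hD11 : D11.PosDef)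
    {Q : Matrix (Fin r) (Fin r) ℂ} (hQ : Q ∈ Matrix.unitaryGroup (Fin r) ℂ) (d : Fin r → ℝ)
    (hdiag : hC.posSemidef.sqrt⁻¹ * D11 * hC.posSemidef.sqrt⁻¹
      = Qᴴ * Matrix.diagonal (fun k => ((d k : ℝ) : ℂ)) * Q) :
    ∃ hX : (hC.posSemidef.sqrt * Qᴴ * Matrix.diagonal (fun k => ((max 1 (d k) : ℝ) : ℂ)) * Q
        * hC.posSemidef.sqrt).PosDef,
      (hC.posSemidef.sqrt * Qᴴ * Matrix.diagonal (fun k => ((max 1 (d k) : ℝ) : ℂ)) * Q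
        * hC.posSemidef.sqrt - D11).PosSemidef ∧
      relEigsDesc hC hX.isHermitian
        = fun k => max 1 (relEigsDesc hC hD11.isHermitian k) := by
  have hS : (hC.posSemidef.sqrt).PosDef := sqrt_posDef hC
  have hSH : (hC.posSemidef.sqrt)ᴴ = hC.posSemidef.sqrt :=
    hC.posSemidef.sqrt_isHermitian'.eq
  have hSdet : IsUnit (hC.posSemidef.sqrt).det := (Matrix.isUnit_iff_isUnit_det _).mp hS.isUnit
  have h21 : hC.posSemidef.sqrt⁻¹ * hC.posSemidef.sqrt = 1 := Matrix.nonsing_inv_mul _ hSdet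
  have h12 : hC.posSemidef.sqrt * hC.posSemidef.sqrt⁻¹ = 1 := Matrix.mul_nonsing_inv _ hSdet
  have hBH : (hC.posSemidef.sqrt * Qᴴ)ᴴ = Q * hC.posSemidef.sqrt := by
    rw [Matrix.conjTranspose_mul, Matrix.conjTranspose_conjTranspose, hSH]
  have hXform : hC.posSemidef.sqrt * Qᴴ * Matrix.diagonal (fun k => ((max 1 (d k) : ℝ) : ℂ)) * Q
      * hC.posSemidef.sqrt
      = (hC.posSemidef.sqrt * Qᴴ) * Matrix.diagonal (fun k => ((max 1 (d k) : ℝ) : ℂ))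
        * (hC.posSemidef.sqrt * Qᴴ)ᴴ := by
    rw [hBH]
    simp only [Matrix.mul_assoc]
  have hQu : IsUnit Q := unitary_isUnit hQ
  have hBu : IsUnit (hC.posSemidef.sqrt * Qᴴ) :=
    hS.isUnit.mul ((Matrix.isUnit_conjTranspose Q).mpr hQu)
  have hLpos : (Matrix.diagonal (fun k => ((max 1 (d k) : ℝ) : ℂ))).PosDef :=
    Matrix.PosDef.diagonal fun k =>
      Complex.zero_lt_real.mpr (lt_of_lt_of_le one_pos (le_max_left _ _))
  have hXpd : (hC.posSemidef.sqrt * Qᴴ * Matrix.diagonal (fun k => ((max 1 (d k) : ℝ) : ℂ)) * Q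
      * hC.posSemidef.sqrt).PosDef := by
    rw [hXform]
    exact posDef_conj_right hLpos hBu
  have hQH : Qᴴ ∈ Matrix.unitaryGroup (Fin r) ℂ := by
    rw [← Matrix.star_eq_conjTranspose]
    exact Unitary.star_mem hQ
  refine ⟨hXpd, ?_, ?_⟩
  · -- Loewner
    have hD11eq : D11 = (hC.posSemidef.sqrt * Qᴴ) * Matrix.diagonal (fun k => ((d k : ℝ) : ℂ))
        * (hC.posSemidef.sqrt * Qᴴ)ᴴ := by
      calc D11 = hC.posSemidef.sqrt * (hC.posSemidef.sqrt⁻¹ * D11 * hC.posSemidef.sqrt⁻¹)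
          * hC.posSemidef.sqrt := (conj_cancel h12 h21 D11).symm
        _ = hC.posSemidef.sqrt * (Qᴴ * Matrix.diagonal (fun k => ((d k : ℝ) : ℂ)) * Q)
          * hC.posSemidef.sqrt := by rw [hdiag]
        _ = (hC.posSemidef.sqrt * Qᴴ) * Matrix.diagonal (fun k => ((d k : ℝ) : ℂ))
          * (hC.posSemidef.sqrt * Qᴴ)ᴴ := by
            rw [hBH]
            simp only [Matrix.mul_assoc]
    rw [hXform, hD11eq, ← Matrix.sub_mul, ← Matrix.mul_sub]
    have hsub : Matrix.diagonal (fun k => ((max 1 (d k) : ℝ) : ℂ))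
        - Matrix.diagonal (fun k => ((d k : ℝ) : ℂ))
        = Matrix.diagonal (fun k => ((max 1 (d k) - d k : ℝ) : ℂ)) := by
      refine Matrix.ext fun i j => ?_
      by_cases hij : i = j
      · subst hij
        simp [Matrix.diagonal_apply_eq]
      · simp [Matrix.diagonal_apply_ne _ hij]
    rw [hsub]
    refine Matrix.PosSemidef.mul_mul_conjTranspose_same (Matrix.PosSemidef.diagonal ?_) _
    intro i
    simp only [Pi.zero_apply]
    exact Complex.zero_le_real.mpr (by simp [sub_nonneg, le_max_right])
  · -- eigenvalues
    have hW : hC.posSemidef.sqrt⁻¹ * (hC.posSemidef.sqrt * Qᴴ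
        * Matrix.diagonal (fun k => ((max 1 (d k) : ℝ) : ℂ)) * Q * hC.posSemidef.sqrt)
        * hC.posSemidef.sqrt⁻¹
        = Qᴴ * Matrix.diagonal (fun k => ((max 1 (d k) : ℝ) : ℂ)) * Q := by
      calc hC.posSemidef.sqrt⁻¹ * (hC.posSemidef.sqrt * Qᴴ
            * Matrix.diagonal (fun k => ((max 1 (d k) : ℝ) : ℂ)) * Q * hC.posSemidef.sqrt)
            * hC.posSemidef.sqrt⁻¹
          = (hC.posSemidef.sqrt⁻¹ * hC.posSemidef.sqrt)
            * (Qᴴ * Matrix.diagonal (fun k => ((max 1 (d k) : ℝ) : ℂ)) * Q)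
            * (hC.posSemidef.sqrt * hC.posSemidef.sqrt⁻¹) := by simp only [Matrix.mul_assoc]
        _ = Qᴴ * Matrix.diagonal (fun k => ((max 1 (d k) : ℝ) : ℂ)) * Q := by
            rw [h21, h12, one_mul, mul_one]
    have hperm1 : (List.ofFn (relEigs hC hXpd.isHermitian)).Perm
        (List.ofFn (fun k => max 1 (d k))) := by
      refine eig_perm _ hQH ?_
      rw [hW, Matrix.conjTranspose_conjTranspose]
    have hperm2 : (List.ofFn (relEigs hC hD11.isHermitian)).Perm (List.ofFn d) := by
      refine eig_perm _ hQH ?_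
      rw [Matrix.conjTranspose_conjTranspose]
      exact hdiag
    funext i
    have e1 := congrFun (sort_comp_eq_of_perm hperm1) i.rev
    have e2 := congrFun (sort_max_one d) i.rev
    have e3 := congrFun (sort_comp_eq_of_perm hperm2) i.rev
    show (relEigs hC hXpd.isHermitian ∘ Tuple.sort (relEigs hC hXpd.isHermitian)) i.rev
      = max 1 ((relEigs hC hD11.isHermitian ∘ Tuple.sort (relEigs hC hD11.isHermitian)) i.rev)
    rw [e1]
    have e2' : ((fun k => max 1 (d k)) ∘ Tuple.sort (fun k => max 1 (d k))) i.rev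
        = max 1 ((d ∘ Tuple.sort d) i.rev) := e2
    rw [e2', e3]

lemma eq_of_prop {C D11 : Matrix (Fin r) (Fin r) ℂ} (hC : C.PosDef) (hD11 : D11.PosDef)
    (hM : (hC.posSemidef.sqrt⁻¹ * D11 * hC.posSemidef.sqrt⁻¹).IsHermitian)
    {X : Matrix (Fin r) (Fin r) ℂ} (hX : X.PosDef)
    (hlo : (X - D11).PosSemidef)
    (heig : relEigsDesc hC hX.isHermitian
      = fun k => max 1 (relEigsDesc hC hD11.isHermitian k)) :
    X = hC.posSemidef.sqrt * (hM.eigenvectorUnitary : Matrix (Fin r) (Fin r) ℂ)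
      * Matrix.diagonal (fun k => ((max 1 (hM.eigenvalues k) : ℝ) : ℂ))
      * star (hM.eigenvectorUnitary : Matrix (Fin r) (Fin r) ℂ)
      * hC.posSemidef.sqrt := by
  have hS : (hC.posSemidef.sqrt).PosDef := sqrt_posDef hC
  have hSdet : IsUnit (hC.posSemidef.sqrt).det := (Matrix.isUnit_iff_isUnit_det _).mp hS.isUnit
  have h21 : hC.posSemidef.sqrt⁻¹ * hC.posSemidef.sqrt = 1 := Matrix.nonsing_inv_mul _ hSdet
  have h12 : hC.posSemidef.sqrt * hC.posSemidef.sqrt⁻¹ = 1 := Matrix.mul_nonsing_inv _ hSdet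
  have hSiH : (hC.posSemidef.sqrt⁻¹).IsHermitian :=
    hC.posSemidef.sqrt_isHermitian'.inv
  set Y := hC.posSemidef.sqrt⁻¹ * X * hC.posSemidef.sqrt⁻¹ with hYdef
  have hY : Y.IsHermitian := relHerm hC hX.isHermitian
  set uU := (hM.eigenvectorUnitary : Matrix (Fin r) (Fin r) ℂ) with hUdef
  have hUst : uU * star uU = 1 := (Matrix.mem_unitaryGroup_iff).mp hM.eigenvectorUnitary.2
  have hstU : star uU * uU = 1 := (Matrix.mem_unitaryGroup_iff').mp hM.eigenvectorUnitary.2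
  have heig' : (fun i : Fin r => (hY.eigenvalues ∘ Tuple.sort hY.eigenvalues) i.rev)
      = fun i => max 1 ((hM.eigenvalues ∘ Tuple.sort hM.eigenvalues) i.rev) := heig
  -- all eigenvalues of Y are at least 1
  have h1le : ∀ j, 1 ≤ hY.eigenvalues j := by
    intro j
    have := congrFun heig' (((Tuple.sort hY.eigenvalues)⁻¹ j).rev)
    rw [Fin.rev_rev] at this
    simp only [Function.comp_apply, Equiv.Perm.inv_def, Equiv.apply_symm_apply] at this
    rw [this]
    exact le_max_left _ _
  -- trace identity
  have htr : Y.trace = ((∑ i, max 1 (hM.eigenvalues i) : ℝ) : ℂ) := by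
    rw [trace_eq_sum_eigen hY]
    congr 1
    have hs1 : ∑ j, hY.eigenvalues j
        = ∑ i, (hY.eigenvalues ∘ Tuple.sort hY.eigenvalues) (Fin.rev i) :=
      (sum_desc hY.eigenvalues (Tuple.sort hY.eigenvalues)).symm
    rw [hs1, Finset.sum_congr rfl fun i _ => congrFun heig' i]
    exact sum_desc (fun j => max 1 (hM.eigenvalues j)) (Tuple.sort hM.eigenvalues)
  -- Y dominates M
  have hYM : (Y - hC.posSemidef.sqrt⁻¹ * D11 * hC.posSemidef.sqrt⁻¹).PosSemidef := by
    have key : Y - hC.posSemidef.sqrt⁻¹ * D11 * hC.posSemidef.sqrt⁻¹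
        = (hC.posSemidef.sqrt⁻¹)ᴴ * (X - D11) * hC.posSemidef.sqrt⁻¹ := by
      rw [hSiH.eq, Matrix.mul_sub, Matrix.sub_mul]
    rw [key]
    exact Matrix.PosSemidef.conjTranspose_mul_mul_same hlo _
  -- conjugate by the eigenvector unitary of M
  have hMdiag : star uU * (hC.posSemidef.sqrt⁻¹ * D11 * hC.posSemidef.sqrt⁻¹) * uU
      = Matrix.diagonal (fun i => ((hM.eigenvalues i : ℝ) : ℂ)) := by
    conv_lhs => rw [hM.spectral_theorem, Unitary.conjStarAlgAut_apply]
    calc star uU * (uU * Matrix.diagonal (RCLike.ofReal ∘ hM.eigenvalues) * star uU) * uU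
        = (star uU * uU) * Matrix.diagonal (RCLike.ofReal ∘ hM.eigenvalues) * (star uU * uU) := by
          simp only [Matrix.mul_assoc]
      _ = Matrix.diagonal (fun i => ((hM.eigenvalues i : ℝ) : ℂ)) := by
          rw [hstU, one_mul, mul_one]
          rfl
  have hA' : (star uU * Y * uU
      - Matrix.diagonal (fun i => ((hM.eigenvalues i : ℝ) : ℂ))).PosSemidef := by
    have key : star uU * Y * uU - Matrix.diagonal (fun i => ((hM.eigenvalues i : ℝ) : ℂ))
        = uUᴴ * (Y - hC.posSemidef.sqrt⁻¹ * D11 * hC.posSemidef.sqrt⁻¹) * uU := by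
      rw [← hMdiag, ← Matrix.star_eq_conjTranspose, Matrix.mul_sub, Matrix.sub_mul]
    rw [key]
    exact Matrix.PosSemidef.conjTranspose_mul_mul_same hYM _
  have hB' : (star uU * Y * uU - 1).PosSemidef := by
    have key : star uU * Y * uU - 1 = uUᴴ * (Y - 1) * uU := by
      rw [← Matrix.star_eq_conjTranspose, Matrix.mul_sub, mul_one, Matrix.sub_mul, hstU]
    rw [key]
    exact Matrix.PosSemidef.conjTranspose_mul_mul_same (sub_one_psd hY h1le) _
  have htr' : (star uU * Y * uU).trace = ((∑ i, max 1 (hM.eigenvalues i) : ℝ) : ℂ) := by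
    rw [Matrix.trace_mul_comm, ← Matrix.mul_assoc, hUst, one_mul, htr]
  have hcore := core hM.eigenvalues hA' hB' htr'
  -- reconstruct Y and X
  have hYeq : Y = uU * Matrix.diagonal (fun k => ((max 1 (hM.eigenvalues k) : ℝ) : ℂ))
      * star uU := by
    calc Y = (uU * star uU) * Y * (uU * star uU) := by rw [hUst, one_mul, mul_one]
      _ = uU * (star uU * Y * uU) * star uU := by simp only [Matrix.mul_assoc]
      _ = uU * Matrix.diagonal (fun k => ((max 1 (hM.eigenvalues k) : ℝ) : ℂ)) * star uU := by
          rw [hcore]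
  have hXeq : X = hC.posSemidef.sqrt * Y * hC.posSemidef.sqrt := by
    rw [hYdef]
    exact (conj_cancel h12 h21 X).symm
  rw [hXeq, hYeq]
  simp only [Matrix.mul_assoc]

end UProj

end Helpers

open Matrix
open scoped ComplexOrder

/-- Uniqueness of the projection `D₋` onto `Ω₋(D)`: there is a unique `X` with
`D₁₁ ⪯ X` whose pencil eigenvalues `λ_k(C⁻¹X)` are `max{1, λ_k(C⁻¹D₁₁)}`, and it is
given explicitly by `C^{1/2} Qᴴ Λ Q C^{1/2}`. -/
theorem unique_projection
    {r s : ℕ} (hrs : r ≤ s) (C : Mat r) (hC : C.PosDef) (D : Mat s) (hD : D.PosDef)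
    (hD11 : (D.submatrix (Fin.castLE hrs) (Fin.castLE hrs)).PosDef) :
    (∃! X : Mat r, ∃ hX : X.PosDef,
      loewner (D.submatrix (Fin.castLE hrs) (Fin.castLE hrs)) X ∧
      relEigsDesc hC hX.isHermitian =
        fun k => max 1 (relEigsDesc hC hD11.isHermitian k)) ∧
    ∀ Q ∈ Matrix.unitaryGroup (Fin r) ℂ,
      hC.posSemidef.sqrt⁻¹ * (D.submatrix (Fin.castLE hrs) (Fin.castLE hrs)) *
          hC.posSemidef.sqrt⁻¹ =
        Qᴴ * Matrix.diagonal (fun k => ((relEigsDesc hC hD11.isHermitian k : ℝ) : ℂ)) * Q →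
      ∃ hX : (hC.posSemidef.sqrt * Qᴴ *
          Matrix.diagonal (fun k => ((max 1 (relEigsDesc hC hD11.isHermitian k) : ℝ) : ℂ)) *
          Q * hC.posSemidef.sqrt).PosDef,
        loewner (D.submatrix (Fin.castLE hrs) (Fin.castLE hrs))
          (hC.posSemidef.sqrt * Qᴴ *
            Matrix.diagonal (fun k => ((max 1 (relEigsDesc hC hD11.isHermitian k) : ℝ) : ℂ)) *
            Q * hC.posSemidef.sqrt) ∧
        relEigsDesc hC hX.isHermitian =
          fun k => max 1 (relEigsDesc hC hD11.isHermitian k) := by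
  have hM : (hC.posSemidef.sqrt⁻¹ * (D.submatrix (Fin.castLE hrs) (Fin.castLE hrs))
      * hC.posSemidef.sqrt⁻¹).IsHermitian := UProj.relHerm hC hD11.isHermitian
  have hQH : (star (hM.eigenvectorUnitary : Mat r))ᴴ = (hM.eigenvectorUnitary : Mat r) := by
    rw [← Matrix.star_eq_conjTranspose, star_star]
  have hQmem : star (hM.eigenvectorUnitary : Mat r) ∈ Matrix.unitaryGroup (Fin r) ℂ :=
    Unitary.star_mem hM.eigenvectorUnitary.2
  have hdiag0 : hC.posSemidef.sqrt⁻¹ * (D.submatrix (Fin.castLE hrs) (Fin.castLE hrs))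
      * hC.posSemidef.sqrt⁻¹
      = (star (hM.eigenvectorUnitary : Mat r))ᴴ
        * Matrix.diagonal (fun k => ((hM.eigenvalues k : ℝ) : ℂ))
        * star (hM.eigenvectorUnitary : Mat r) := by
    rw [hQH]
    exact hM.spectral_theorem
  obtain ⟨hX₀, hlo₀, heig₀⟩ := UProj.prop_of_diag hC hD11 hQmem hM.eigenvalues hdiag0
  constructor
  · refine ⟨_, ⟨hX₀, hlo₀, heig₀⟩, ?_⟩
    intro X' hX'
    obtain ⟨hX'pd, hlo', heig'⟩ := hX'
    have h1 := UProj.eq_of_prop hC hD11 hM hX'pd hlo' heig'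
    rw [h1, hQH]
  · intro Q hQ hdiag
    exact UProj.prop_of_diag hC hD11 hQ _ hdiag
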